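/- arXiv:2001.11981 — 2 statements merged into one kernel-verified Lean document; each statement's English description precedes it below -/
import Mathlib

section
/- Let q be a power of 2 and d ∈ Z_q^m. If the monomial X^d is d*-good over F_q (i.e., there is no i ∈ Z_q^m with i ≤₂ d componentwise and deg(i) mod* q ∈ {d₀, d₀+1, ..., q-1}, for a threshold d₀ < q), then for every line L in F_q^m parameterized as (aT + b) with a, b ∈ F_q^m, the restriction of the polynomial X^d to L, reduced modulo T^q - T, is a univariate polynomial of degree less than d₀. -/
open Polynomial Finset

def le2 (a b : ℕ) : Prop := ∀ t, a.testBit t = true → b.testBit t = true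

def modStar (a q : ℕ) : ℕ :=
  if a = 0 then 0
  else if a % (q - 1) = 0 then q - 1 else a % (q - 1)

lemma le2_le {e d : ℕ} (h : le2 e d) : e ≤ d := by
  have he : e &&& d = e := by
    apply Nat.eq_of_testBit_eq
    intro t
    rw [Nat.testBit_and]
    cases het : e.testBit t
    · simp
    · simp [h t het]
  calc e = e &&& d := he.symm
    _ ≤ d := Nat.and_le_right

lemma le2_of_choose_odd : ∀ d k : ℕ, Nat.choose d k % 2 = 1 → le2 k d := by
  intro d
  induction d using Nat.strong_induction_on with
  | _ d ih =>
    intro k h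
    rcases Nat.eq_zero_or_pos d with rfl | hdpos
    · have hk : k = 0 := by
        by_contra hk
        rcases Nat.exists_eq_succ_of_ne_zero hk with ⟨k', rfl⟩
        simp [Nat.choose] at h
      subst hk
      intro t ht
      simp at ht
    · haveI : Fact (Nat.Prime 2) := ⟨Nat.prime_two⟩
      have h2 := Choose.choose_modEq_choose_mod_mul_choose_div_nat (p := 2) (n := d) (k := k)
      unfold Nat.ModEq at h2
      rw [h] at h2
      have hmul : (Nat.choose (d % 2) (k % 2) * Nat.choose (d / 2) (k / 2)) % 2 = 1 := h2.symm
      have h1 : Nat.choose (d % 2) (k % 2) % 2 = 1 ∧ Nat.choose (d / 2) (k / 2) % 2 = 1 := by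
        rw [Nat.mul_mod] at hmul
        rcases Nat.mod_two_eq_zero_or_one (Nat.choose (d % 2) (k % 2)) with h' | h' <;>
        rcases Nat.mod_two_eq_zero_or_one (Nat.choose (d / 2) (k / 2)) with h'' | h'' <;>
          simp [h', h''] at hmul ⊢ <;> omega
      have hrec : le2 (k / 2) (d / 2) :=
        ih (d / 2) (Nat.div_lt_self hdpos one_lt_two) _ h1.2
      have hbit0 : k % 2 = 1 → d % 2 = 1 := by
        intro hk1
        by_contra hd1
        have hd0 : d % 2 = 0 := by omega
        rw [hk1, hd0] at h1
        simp [Nat.choose] at h1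
      intro t ht
      cases t with
      | zero =>
        simp only [Nat.testBit_zero, decide_eq_true_eq] at ht ⊢
        exact hbit0 ht
      | succ t =>
        rw [Nat.testBit_succ] at ht ⊢
        exact hrec t ht

lemma coeff_line_pow {F : Type*} [Field F] [CharP F 2] (a b : F) (d k : ℕ)
    (h : ((C a * X + C b) ^ d).coeff k ≠ 0) : le2 k d := by
  rw [add_pow, finset_sum_coeff] at h
  obtain ⟨i, hi, hne⟩ := Finset.exists_ne_zero_of_sum_ne_zero h
  have hterm : (C a * X) ^ i * C b ^ (d - i) * (d.choose i : F[X]) =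
      C (a ^ i * b ^ (d - i) * (d.choose i : F)) * X ^ i := by
    simp only [mul_pow, ← C_pow, ← C_eq_natCast, C_mul]
    ring
  rw [hterm, coeff_C_mul, coeff_X_pow] at hne
  by_cases hik : k = i
  · rw [if_pos hik, mul_one] at hne
    have hchoose : (d.choose i : F) ≠ 0 := fun h0 => hne (by rw [h0, mul_zero])
    have hdvd : ¬ (2 ∣ d.choose i) := fun hdd => hchoose ((CharP.cast_eq_zero_iff F 2 _).2 hdd)
    have hres := le2_of_choose_odd d i (by omega)
    rwa [← hik] at hres
  · rw [if_neg hik, mul_zero] at hne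
    exact absurd rfl hne

lemma exists_decomp {F : Type*} [CommSemiring F] {ι : Type*} [DecidableEq ι] (s : Finset ι)
    (f : ι → Polynomial F) :
    ∀ n : ℕ, (∏ j ∈ s, f j).coeff n ≠ 0 →
      ∃ e : ι → ℕ, (∀ j ∈ s, (f j).coeff (e j) ≠ 0) ∧ ∑ j ∈ s, e j = n := by
  induction s using Finset.induction_on with
  | empty =>
    intro n h
    rw [Finset.prod_empty, coeff_one] at h
    refine ⟨fun _ => 0, by simp, ?_⟩
    simp only [Finset.sum_empty]
    by_contra hn
    simp [Ne.symm hn] at h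
  | insert _ _ ha ih =>
    rename_i c s
    intro n h
    rw [Finset.prod_insert ha, coeff_mul] at h
    obtain ⟨⟨p, r⟩, hmem, hne⟩ := Finset.exists_ne_zero_of_sum_ne_zero h
    have hfa : (f c).coeff p ≠ 0 := left_ne_zero_of_mul hne
    have hrest : (∏ j ∈ s, f j).coeff r ≠ 0 := right_ne_zero_of_mul hne
    obtain ⟨e, he, hsum⟩ := ih r hrest
    refine ⟨Function.update e c p, ?_, ?_⟩
    · intro j hj
      rcases Finset.mem_insert.1 hj with rfl | hj
      · rwa [Function.update_self]
      · rw [Function.update_of_ne (fun hjc => ha (by rw [← hjc]; exact hj))]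
        exact he j hj
    · rw [Finset.sum_insert ha, Function.update_self]
      have : ∑ j ∈ s, Function.update e c p j = ∑ j ∈ s, e j :=
        Finset.sum_congr rfl fun j hj =>
          Function.update_of_ne (fun hjc => ha (by rw [← hjc]; exact hj)) _ _
      rw [this, hsum]
      exact Finset.HasAntidiagonal.mem_antidiagonal.1 hmem

lemma modStar_le {n q : ℕ} (hq : 2 ≤ q) (hn : 0 < n) : modStar n q ≤ n := by
  unfold modStar
  rw [if_neg hn.ne']
  split_ifs with h
  · exact Nat.le_of_dvd hn (Nat.dvd_of_mod_eq_zero h)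
  · exact Nat.mod_le _ _

lemma modStar_lt {n q : ℕ} (hq : 2 ≤ q) : modStar n q < q := by
  unfold modStar
  have : n % (q - 1) < q - 1 := Nat.mod_lt _ (by omega)
  split_ifs <;> omega

lemma Xpow_modByMonic {F : Type*} [Field F] (q : ℕ) (hq2 : 2 ≤ q) (n : ℕ) :
    (X ^ n : Polynomial F) %ₘ (X ^ q - X) = X ^ (modStar n q) := by
  have hdX : (X : F[X]).degree < ((X : F[X]) ^ q).degree := by
    rw [degree_X, degree_X_pow]
    exact_mod_cast (by omega : (1 : ℕ) < q)
  have hmonic : Monic ((X : F[X]) ^ q - X) := by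
    apply monic_X_pow_sub
    rw [degree_X]
    exact_mod_cast (by omega : (1 : ℕ) < q)
  have hdeg : ((X : F[X]) ^ q - X).degree = (q : WithBot ℕ) := by
    rw [degree_sub_eq_left_of_degree_lt hdX, degree_X_pow]
  have hself : ∀ r : ℕ, r < q → (X ^ r : F[X]) %ₘ (X ^ q - X) = X ^ r := by
    intro r hr
    refine (modByMonic_eq_self_iff hmonic).2 ?_
    rw [hdeg, degree_X_pow]
    exact_mod_cast hr
  rcases Nat.eq_zero_or_pos n with rfl | hn
  · have : modStar 0 q = 0 := by simp [modStar]
    rw [this]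
    exact hself 0 (by omega)
  · set r := modStar n q with hr
    have hr1 : 1 ≤ r := by
      unfold modStar at hr
      rw [if_neg hn.ne'] at hr
      split_ifs at hr <;> omega
    have hrn : r ≤ n := modStar_le hq2 hn
    have hdvd1 : (q - 1) ∣ (n - r) := by
      unfold modStar at hr
      rw [if_neg hn.ne'] at hr
      split_ifs at hr with h
      · obtain ⟨c, hc⟩ := Nat.dvd_of_mod_eq_zero h
        rw [hr]
        cases c with
        | zero => simp at hc; omega
        | succ c' =>
          exact ⟨c', by rw [hc, Nat.mul_succ, Nat.add_sub_cancel]⟩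
      · rw [hr]
        exact ⟨n / (q - 1), by
          have := Nat.mod_add_div n (q - 1)
          omega⟩
    obtain ⟨c, hc⟩ := hdvd1
    have hdvd : ((X : F[X]) ^ q - X) ∣ (X ^ n - X ^ r) := by
      have heq : (X : F[X]) ^ n - X ^ r = (X * X ^ (r - 1)) * ((X ^ (q - 1)) ^ c - 1 ^ c) := by
        rw [one_pow, mul_sub, mul_one, ← pow_succ', ← pow_mul, ← pow_add]
        congr 1
        · congr 1
          omega
        · congr 1
          omega
      have heqD : (X : F[X]) ^ q - X = X * (X ^ (q - 1) - 1) := by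
        rw [mul_sub, mul_one, ← pow_succ']
        congr 2
        omega
      rw [heq, heqD]
      exact mul_dvd_mul (dvd_mul_right _ _) (sub_dvd_pow_sub_pow _ _ c)
    have hzero : ((X : F[X]) ^ n - X ^ r) %ₘ (X ^ q - X) = 0 :=
      (modByMonic_eq_zero_iff_dvd hmonic).2 hdvd
    have : (X : F[X]) ^ n = (X ^ n - X ^ r) + X ^ r := by ring
    rw [this, add_modByMonic, hzero, zero_add]
    exact hself r (modStar_lt hq2)

theorem stmt3 (ℓ m : ℕ) (hℓ : 1 ≤ ℓ) (hm : 1 ≤ m) (q : ℕ) (hq : q = 2 ^ ℓ)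
    (F : Type*) [Field F] [Fintype F] (hF : Fintype.card F = q) [CharP F 2]
    (d : Fin m → ℕ) (hd : ∀ j, d j < q)
    (d₀ : ℕ) (hd₀pos : 0 < d₀) (hd₀ : d₀ < q)
    (hgood : ¬ ∃ i : Fin m → ℕ, (∀ j, i j < q) ∧ (∀ j, le2 (i j) (d j)) ∧
      d₀ ≤ modStar (∑ j, i j) q)
    (a b : Fin m → F) :
    ((∏ j, (C (a j) * X + C (b j)) ^ (d j)) %ₘ (X ^ q - X)).degree < (d₀ : ℕ) := by
  have hq2 : 2 ≤ q := by
    rw [hq]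
    calc 2 = 2 ^ 1 := by norm_num
      _ ≤ 2 ^ ℓ := Nat.pow_le_pow_right (by norm_num) hℓ
  push_neg at hgood
  set P : F[X] := ∏ j, (C (a j) * X + C (b j)) ^ (d j) with hP
  have key : ∀ n, P.coeff n ≠ 0 → modStar n q < d₀ := by
    intro n hn
    obtain ⟨e, he, hsum⟩ := exists_decomp Finset.univ (fun j => (C (a j) * X + C (b j)) ^ (d j)) n hn
    have hle2 : ∀ j, le2 (e j) (d j) :=
      fun j => coeff_line_pow _ _ _ _ (he j (Finset.mem_univ j))
    have helt : ∀ j, e j < q := fun j => lt_of_le_of_lt (le2_le (hle2 j)) (hd j)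
    have := hgood e helt hle2
    rw [hsum] at this
    omega
  conv_lhs => rw [P.as_sum_support_C_mul_X_pow]
  have hsum : (∑ i ∈ P.support, C (P.coeff i) * X ^ i) %ₘ (X ^ q - X) =
      ∑ i ∈ P.support, (C (P.coeff i) * X ^ i) %ₘ (X ^ q - X) := by
    simpa using map_sum (modByMonicHom ((X : F[X]) ^ q - X))
      (fun i => C (P.coeff i) * X ^ i) P.support
  rw [hsum]
  refine lt_of_le_of_lt (degree_sum_le _ _) ?_
  rw [Finset.sup_lt_iff (by exact_mod_cast WithBot.bot_lt_coe (d₀ : ℕ))]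
  intro i hi
  have hco : P.coeff i ≠ 0 := mem_support_iff.1 hi
  have : (C (P.coeff i) * X ^ i) %ₘ (X ^ q - X) = C (P.coeff i) * X ^ (modStar i q) := by
    rw [← smul_eq_C_mul, smul_modByMonic, Xpow_modByMonic q hq2, smul_eq_C_mul]
  rw [this]
  refine lt_of_le_of_lt (degree_C_mul_X_pow_le _ _) ?_
  exact_mod_cast key i hco
end

section
/- Let q = 2^ℓ, r ≤ min(m, q), and for j ≥ 0 let S_j(ℓ) = { d ∈ Z_q^m : ∃ i ≤₂ d with deg(i) = (q - r) + j·q }. If d ∈ S_j(ℓ) then d ∈ S_l(ℓ) for every nonnegative integer l < j. -/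
open Finset

/-- membership in S_j(ℓ): d admits i ≤₂ d with deg(i) = (2^ℓ - r) + j·2^ℓ. -/
def memS (m r ℓ j : ℕ) (d : Fin m → ℕ) : Prop :=
  ∃ i : Fin m → ℕ, (∀ k, i k < 2 ^ ℓ) ∧ (∀ k, le2 (i k) (d k)) ∧
    (∑ k, i k) = (2 ^ ℓ - r) + j * 2 ^ ℓ

lemma le2_refl (a : ℕ) : le2 a a := fun _ h => h

lemma le2_trans {a b c : ℕ} (h1 : le2 a b) (h2 : le2 b c) : le2 a c :=
  fun t ht => h2 t (h1 t ht)

lemma le2_le_s6 {a b : ℕ} (h : le2 a b) : a ≤ b := by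
  have key : a &&& b = a := by
    apply Nat.eq_of_testBit_eq
    intro t
    rw [Nat.testBit_and]
    cases hat : a.testBit t with
    | false => simp
    | true => simp [h t hat]
  calc a = a &&& b := key.symm
    _ ≤ b := Nat.and_le_right

lemma le2_mod_pow (a n : ℕ) : le2 (a % 2 ^ n) a := by
  intro t ht
  rw [Nat.testBit_mod_two_pow] at ht
  simp only [Bool.and_eq_true] at ht
  exact ht.2

/-- Key reduction: from i with components < 2^n and sum ≥ M·2^n we can remove
bits (pointwise submasks) totalling exactly M·2^n. -/
lemma reduce {m : ℕ} (n : ℕ) : ∀ (M : ℕ) (i : Fin m → ℕ),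
    (∀ k, i k < 2 ^ n) → M * 2 ^ n ≤ ∑ k, i k →
    ∃ i' : Fin m → ℕ, (∀ k, le2 (i' k) (i k)) ∧
      (∑ k, i' k) + M * 2 ^ n = ∑ k, i k := by
  induction n with
  | zero =>
    intro M i hi hM
    have hz : ∀ k, i k = 0 := fun k => Nat.lt_one_iff.mp (by simpa using hi k)
    have hs : ∑ k, i k = 0 := Finset.sum_eq_zero (fun k _ => hz k)
    refine ⟨i, fun k => le2_refl _, ?_⟩
    rw [hs] at hM ⊢
    simp at hM
    simp [hM]
  | succ n ih =>
    intro M i hi hM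
    set X := 2 ^ n with hX
    set P : Finset (Fin m) := Finset.univ.filter (fun k => X ≤ i k) with hP
    have hsub : ∀ k, X ≤ i k → i k - X = i k % X := by
      intro k hk
      have h1 : i k - X < X := by
        have := hi k
        rw [pow_succ] at this
        omega
      rw [Nat.mod_eq_sub_mod hk, Nat.mod_eq_of_lt h1]
    by_cases hc : 2 * M ≤ P.card
    · obtain ⟨t, hts, htc⟩ := Finset.exists_subset_card_eq hc
      have htmem : ∀ k ∈ t, X ≤ i k := by
        intro k hk
        have := hts hk
        rw [hP, Finset.mem_filter] at this
        exact this.2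
      refine ⟨fun k => if k ∈ t then i k - X else i k, ?_, ?_⟩
      · intro k
        by_cases hk : k ∈ t
        · simp only [hk, if_pos]
          rw [hsub k (htmem k hk)]
          exact le2_mod_pow _ _
        · simp only [hk, if_neg, not_false_iff]
          exact le2_refl _
      · have hsplit : ∑ k, (if k ∈ t then i k - X else i k) +
            ∑ k, (if k ∈ t then X else 0) = ∑ k, i k := by
          rw [← Finset.sum_add_distrib]
          apply Finset.sum_congr rfl
          intro k _
          by_cases hk : k ∈ t
          · simp only [hk, if_pos]
            exact Nat.sub_add_cancel (htmem k hk)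
          · simp [hk]
        have hite : ∑ k, (if k ∈ t then X else 0) = 2 * M * X := by
          rw [Finset.sum_ite_mem, Finset.univ_inter, Finset.sum_const, htc, smul_eq_mul]
        have h2 : M * 2 ^ (n + 1) = 2 * M * X := by
          rw [hX, pow_succ]; ring
        rw [h2]
        rw [hite] at hsplit
        exact hsplit
    · -- clear all top bits, recurse
      set j : Fin m → ℕ := fun k => i k % X with hj
      have hjlt : ∀ k, j k < 2 ^ n := fun k => Nat.mod_lt _ (Nat.pow_pos (n := n) (by norm_num))
      have hsplit : ∑ k, j k + ∑ k, (if X ≤ i k then X else 0) = ∑ k, i k := by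
        rw [← Finset.sum_add_distrib]
        apply Finset.sum_congr rfl
        intro k _
        by_cases hk : X ≤ i k
        · rw [if_pos hk]
          have h := hsub k hk
          show i k % X + X = i k
          omega
        · rw [if_neg hk]
          show i k % X + 0 = i k
          rw [Nat.mod_eq_of_lt (by omega), add_zero]
      have hite : ∑ k, (if X ≤ i k then X else 0) = P.card * X := by
        rw [Finset.sum_ite, Finset.sum_const_zero, add_zero, Finset.sum_const, smul_eq_mul]
      rw [hite] at hsplit
      have h2 : M * 2 ^ (n + 1) = 2 * M * X := by
        rw [hX, pow_succ]; ring
      have h1 : (2 * M - P.card) * X + P.card * X = 2 * M * X := by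
        rw [← add_mul]
        congr 1
        omega
      have hM' : (2 * M - P.card) * X ≤ ∑ k, j k := by
        rw [h2] at hM
        linarith
      obtain ⟨j', hle', hsum'⟩ := ih (2 * M - P.card) j hjlt hM'
      refine ⟨j', ?_, ?_⟩
      · intro k
        exact le2_trans (hle' k) (le2_mod_pow _ _)
      · rw [h2]
        linarith

theorem stmt6 (ℓ m r : ℕ) (hm : 1 ≤ m) (hr : 1 ≤ r) (hrm : r ≤ m) (hrq : r ≤ 2 ^ ℓ)
    (d : Fin m → ℕ) (hd : ∀ k, d k < 2 ^ ℓ) (j : ℕ) (hdS : memS m r ℓ j d) :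
    ∀ l < j, memS m r ℓ l d := by
  intro l hl
  obtain ⟨i, hlt, hle, hsum⟩ := hdS
  have hjl : (j - l) * 2 ^ ℓ + l * 2 ^ ℓ = j * 2 ^ ℓ := by
    rw [← add_mul]
    congr 1
    omega
  have hle2 : (j - l) * 2 ^ ℓ ≤ ∑ k, i k := by
    rw [hsum]
    calc (j - l) * 2 ^ ℓ ≤ j * 2 ^ ℓ := mul_le_mul_left (Nat.sub_le j l) _
      _ ≤ (2 ^ ℓ - r) + j * 2 ^ ℓ := Nat.le_add_left _ _
  obtain ⟨i', hle', hsum'⟩ := reduce ℓ (j - l) i hlt hle2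
  refine ⟨i', ?_, ?_, ?_⟩
  · intro k
    exact lt_of_le_of_lt (le2_le_s6 (hle' k)) (hlt k)
  · intro k
    exact le2_trans (hle' k) (hle k)
  · rw [hsum] at hsum'
    linarith
end
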